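/- arXiv:0709.1660 — 3 statements merged into one kernel-verified Lean document; each statement's English description precedes it below -/
import Mathlib

section
/- Assume F_A(b') is finite for every b' ∈ ℤ^m. Let b ∈ ℤ^m and let x ∈ F_A(b) be dominated, i.e. there exists y ∈ F_A(b) with C·y ⪇ C·x. Then there exist a minimal element α of L_C and a Pareto-optimal β of F_A(A·α) such that x − α + β has nonnegative components, x − α + β ∈ F_A(b), and C·(x − α + β) ⪇ C·x. -/
open Matrix

/-- Cast a vector of naturals to a vector of integers. -/
def toInt {n : ℕ} (x : Fin n → ℕ) : Fin n → ℤ := fun i => (x i : ℤ)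

/-- `domLt C v u` means `C·v ⪇ C·u`: componentwise `≤` with `C·v ≠ C·u`. -/
def domLt {n k : ℕ} (C : Matrix (Fin k) (Fin n) ℤ) (v u : Fin n → ℤ) : Prop :=
  (∀ j, C.mulVec v j ≤ C.mulVec u j) ∧ C.mulVec v ≠ C.mulVec u

/-- The feasible set `F_A(b) = {x ∈ ℕ^n : A·x = b}`. -/
def FA {m n : ℕ} (A : Matrix (Fin m) (Fin n) ℤ) (b : Fin m → ℤ) : Set (Fin n → ℕ) :=
  {x | A.mulVec (toInt x) = b}

/-- `x` is Pareto-optimal for `b`: feasible and not dominated by any feasible point. -/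
def ParetoOpt {m n k : ℕ} (A : Matrix (Fin m) (Fin n) ℤ) (C : Matrix (Fin k) (Fin n) ℤ)
    (b : Fin m → ℤ) (x : Fin n → ℕ) : Prop :=
  x ∈ FA A b ∧ ¬ ∃ y ∈ FA A b, domLt C (toInt y) (toInt x)

/-- The set `L_C` of dominated solutions of all fibers. -/
def LC {m n k : ℕ} (A : Matrix (Fin m) (Fin n) ℤ) (C : Matrix (Fin k) (Fin n) ℤ) :
    Set (Fin n → ℕ) :=
  {α | ∃ β : Fin n → ℕ, A.mulVec (toInt β) = A.mulVec (toInt α) ∧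
    domLt C (toInt β) (toInt α)}

/-- The minimal elements of `L_C` with respect to the componentwise order. -/
def minLC {m n k : ℕ} (A : Matrix (Fin m) (Fin n) ℤ) (C : Matrix (Fin k) (Fin n) ℤ) :
    Set (Fin n → ℕ) :=
  {α ∈ LC A C | ∀ α' ∈ LC A C, (∀ i, α' i ≤ α i) → α' = α}

/-!
Since `x` is dominated in its fiber, `x ∈ L_C`, and as `ℕⁿ` is well-founded there is a minimal
`α ∈ L_C` with `α ≤ x`. Some `β'` in the fiber of `A·α` has `C·β' ⪇ C·α`; that fiber is finite,
so it contains a Pareto-optimal `β` with `C·β ≤ C·β'`, hence `C·β ⪇ C·α`. Replacing `α` by `β`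
inside `x` keeps `A·x` and lowers `C·x` by `C·α - C·β`.
-/

section Domination

variable {n k : ℕ} (C : Matrix (Fin k) (Fin n) ℤ)

theorem domLt_iff_lt {v u : Fin n → ℤ} : domLt C v u ↔ C *ᵥ v < C *ᵥ u := by
  rw [domLt, lt_iff_le_and_ne]
  rfl

theorem domLt_sub_add_iff (u a b : Fin n → ℤ) : domLt C (u - a + b) u ↔ domLt C b a := by
  rw [domLt_iff_lt, domLt_iff_lt, mulVec_add, mulVec_sub, sub_add_eq_add_sub, sub_lt_iff_lt_add,
    add_lt_add_iff_left]

end Domination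

section Fibers

variable {m n k : ℕ} {A : Matrix (Fin m) (Fin n) ℤ} (C : Matrix (Fin k) (Fin n) ℤ)

theorem mem_LC_of_domLt {b : Fin m → ℤ} {x y : Fin n → ℕ} (hx : x ∈ FA A b) (hy : y ∈ FA A b)
    (hyx : domLt C (toInt y) (toInt x)) : x ∈ LC A C :=
  ⟨y, hy.trans hx.symm, hyx⟩

theorem mem_minLC_iff {α : Fin n → ℕ} : α ∈ minLC A C ↔ Minimal (· ∈ LC A C) α := by
  rw [minimal_iff]
  exact and_congr_right fun _ =>
    forall₂_congr fun _ _ => ⟨fun h hle => (h hle).symm, fun h hle => (h hle).symm⟩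

theorem exists_mem_minLC_le {x : Fin n → ℕ} (hx : x ∈ LC A C) : ∃ α ∈ minLC A C, α ≤ x := by
  obtain ⟨α, hαx, hα⟩ := exists_minimal_le_of_wellFoundedLT (· ∈ LC A C) x hx
  exact ⟨α, (mem_minLC_iff C).2 hα, hαx⟩

theorem exists_paretoOpt_le {b : Fin m → ℤ} (hfin : (FA A b).Finite) {y : Fin n → ℕ}
    (hy : y ∈ FA A b) : ∃ β, ParetoOpt A C b β ∧ C *ᵥ toInt β ≤ C *ᵥ toInt y := by
  obtain ⟨c, hcy, hc⟩ :=
    (hfin.image (fun z => C *ᵥ toInt z)).isPWO.exists_le_minimal (Set.mem_image_of_mem _ hy)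
  obtain ⟨β, hβ, rfl⟩ := hc.1
  refine ⟨β, ⟨hβ, ?_⟩, hcy⟩
  rintro ⟨z, hz, hzβ⟩
  exact hc.not_lt (Set.mem_image_of_mem _ hz) ((domLt_iff_lt C).1 hzβ)

end Fibers

theorem dominated_reducible_general {m n k : ℕ}
    (A : Matrix (Fin m) (Fin n) ℤ) (C : Matrix (Fin k) (Fin n) ℤ)
    (hfin : ∀ b' : Fin m → ℤ, (FA A b').Finite)
    (b : Fin m → ℤ) (x : Fin n → ℕ) (hx : x ∈ FA A b)
    (hdom : ∃ y ∈ FA A b, domLt C (toInt y) (toInt x)) :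
    ∃ α ∈ minLC A C, ∃ β : Fin n → ℕ,
      ParetoOpt A C (A.mulVec (toInt α)) β ∧
      (∀ i, (0:ℤ) ≤ toInt x i - toInt α i + toInt β i) ∧
      A.mulVec (toInt x - toInt α + toInt β) = b ∧
      domLt C (toInt x - toInt α + toInt β) (toInt x) := by
  obtain ⟨y, hy, hyx⟩ := hdom
  obtain ⟨α, hα, hαx⟩ := exists_mem_minLC_le C (mem_LC_of_domLt C hx hy hyx)
  obtain ⟨β', hβ'A, hβ'α⟩ := hα.1
  obtain ⟨β, hβ, hββ'⟩ := exists_paretoOpt_le C (hfin _) (y := β') hβ'A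
  refine ⟨α, hα, β, hβ, fun i => ?_, ?_, ?_⟩
  · have : α i ≤ x i := hαx i
    simp only [toInt]
    omega
  · rw [mulVec_add, mulVec_sub, hx, hβ.1, sub_add_cancel]
  · rw [domLt_sub_add_iff, domLt_iff_lt]
    exact hββ'.trans_lt ((domLt_iff_lt C).1 hβ'α)

theorem dominated_reducible {m n k : ℕ} (hm : 0 < m) (hn : 0 < n) (hk : 0 < k)
    (A : Matrix (Fin m) (Fin n) ℤ) (C : Matrix (Fin k) (Fin n) ℤ)
    (hC : ∀ i j, 0 ≤ C i j)
    (hfin : ∀ b' : Fin m → ℤ, (FA A b').Finite)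
    (b : Fin m → ℤ) (x : Fin n → ℕ) (hx : x ∈ FA A b)
    (hdom : ∃ y ∈ FA A b, domLt C (toInt y) (toInt x)) :
    ∃ α ∈ minLC A C, ∃ β : Fin n → ℕ,
      ParetoOpt A C (A.mulVec (toInt α)) β ∧
      (∀ i, (0:ℤ) ≤ toInt x i - toInt α i + toInt β i) ∧
      A.mulVec (toInt x - toInt α + toInt β) = b ∧
      domLt C (toInt x - toInt α + toInt β) (toInt x) :=
  dominated_reducible_general A C hfin b x hx hdom
end

section
/- Let x ∈ F_A(b) be Pareto-optimal for b. Let α, β ∈ ℕ^n satisfy A·α = A·β, and suppose β is Pareto-optimal for A·β (i.e., in the fiber F_A(A·β)). If x − α + β has nonnegative components, then x − α + β ∈ F_A(b), and neither C·(x − α + β) ⪇ C·x nor C·x ⪇ C·(x − α + β) holds; that is, the reduced point x − α + β, when feasible, either equals x in objective values or is incomparable with x. -/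
open Matrix

theorem domLt_add_right_iff {n k : ℕ} (C : Matrix (Fin k) (Fin n) ℤ) (v u w : Fin n → ℤ) :
    domLt C (v + w) (u + w) ↔ domLt C v u := by
  simp only [domLt, mulVec_add, Pi.add_apply, add_le_add_iff_right, ne_eq, add_left_inj]

theorem exists_toInt_eq_of_nonneg {n : ℕ} {v : Fin n → ℤ} (hv : ∀ i, 0 ≤ v i) :
    ∃ y, toInt y = v :=
  ⟨fun i => (v i).toNat, funext fun i => Int.toNat_of_nonneg (hv i)⟩

theorem ParetoOpt.not_domLt {m n k : ℕ} {A : Matrix (Fin m) (Fin n) ℤ}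
    {C : Matrix (Fin k) (Fin n) ℤ} {b : Fin m → ℤ} {x : Fin n → ℕ} (hx : ParetoOpt A C b x)
    {v : Fin n → ℤ} (hv : ∀ i, 0 ≤ v i) (hAv : A *ᵥ v = b) : ¬ domLt C v (toInt x) := by
  obtain ⟨y, rfl⟩ := exists_toInt_eq_of_nonneg hv
  exact fun hdom => hx.2 ⟨y, hAv, hdom⟩

theorem pareto_reduction_incomparable_general {m n k : ℕ}
    (A : Matrix (Fin m) (Fin n) ℤ) (C : Matrix (Fin k) (Fin n) ℤ)
    (b : Fin m → ℤ) (x : Fin n → ℕ) (hx : ParetoOpt A C b x)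
    (α β : Fin n → ℕ)
    (hker : A.mulVec (toInt α) = A.mulVec (toInt β))
    (hβ : ParetoOpt A C (A.mulVec (toInt β)) β)
    (hpos : ∀ i, (0:ℤ) ≤ toInt x i - toInt α i + toInt β i) :
    A.mulVec (toInt x - toInt α + toInt β) = b ∧
    ¬ domLt C (toInt x - toInt α + toInt β) (toInt x) ∧
    ¬ domLt C (toInt x) (toInt x - toInt α + toInt β) := by
  have hfeas : A.mulVec (toInt x - toInt α + toInt β) = b := by
    rw [mulVec_add, mulVec_sub, hker, hx.1]
    abel
  refine ⟨hfeas, hx.not_domLt hpos hfeas, fun hdom => ?_⟩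
  -- Both sides differ from `α` and `β` by the same translation `x - α`.
  have hαβ : domLt C (toInt α) (toInt β) := by
    rw [← domLt_add_right_iff C _ _ (toInt x - toInt α)]
    convert hdom using 1 <;> abel
  exact hβ.not_domLt (fun i => Int.natCast_nonneg (α i)) hker hαβ

theorem pareto_reduction_incomparable {m n k : ℕ} (hm : 0 < m) (hn : 0 < n) (hk : 0 < k)
    (A : Matrix (Fin m) (Fin n) ℤ) (C : Matrix (Fin k) (Fin n) ℤ)
    (hC : ∀ i j, 0 ≤ C i j)
    (b : Fin m → ℤ) (x : Fin n → ℕ) (hx : ParetoOpt A C b x)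
    (α β : Fin n → ℕ)
    (hker : A.mulVec (toInt α) = A.mulVec (toInt β))
    (hβ : ParetoOpt A C (A.mulVec (toInt β)) β)
    (hpos : ∀ i, (0:ℤ) ≤ toInt x i - toInt α i + toInt β i) :
    A.mulVec (toInt x - toInt α + toInt β) = b ∧
    ¬ domLt C (toInt x - toInt α + toInt β) (toInt x) ∧
    ¬ domLt C (toInt x) (toInt x - toInt α + toInt β) :=
  pareto_reduction_incomparable_general A C b x hx α β hker hβ hpos
end

section
/- Suppose F_A(b) is nonempty, fix x₀ ∈ F_A(b), and let M be a positive integer with M > (C·x₀)_j for every j = 1,…,k. Then every Pareto-optimal solution (y, z, x) of the extended multiobjective program EMIP(b) satisfies y = 0 and z = 0 (and hence A·x = b). -/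
open Matrix

/-- Feasibility for the extended program `EMIP(b)`:
`(y, z, x)` satisfies `y i - z + (A·x) i = b i` for all `i`. -/
def EFeas {m n : ℕ} (A : Matrix (Fin m) (Fin n) ℤ) (b : Fin m → ℤ)
    (y : Fin m → ℕ) (z : ℕ) (x : Fin n → ℕ) : Prop :=
  ∀ i, (y i : ℤ) - (z : ℤ) + A.mulVec (toInt x) i = b i

/-- The `j`-th objective value of the extended program `EMIP(b)`. -/
def Phi {m n k : ℕ} (C : Matrix (Fin k) (Fin n) ℤ) (M : ℤ)
    (y : Fin m → ℕ) (z : ℕ) (x : Fin n → ℕ) (j : Fin k) : ℤ :=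
  M * ((∑ i, (y i : ℤ)) + (z : ℤ)) + C.mulVec (toInt x) j

/-- Pareto-optimality for the extended program `EMIP(b)`. -/
def EPareto {m n k : ℕ} (A : Matrix (Fin m) (Fin n) ℤ) (C : Matrix (Fin k) (Fin n) ℤ)
    (M : ℤ) (b : Fin m → ℤ) (y : Fin m → ℕ) (z : ℕ) (x : Fin n → ℕ) : Prop :=
  EFeas A b y z x ∧
  ¬ ∃ y' z' x', EFeas A b y' z' x' ∧
      (∀ j, Phi C M y' z' x' j ≤ Phi C M y z x j) ∧
      (∃ j, Phi C M y' z' x' j < Phi C M y z x j)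

/-! The point `(0, 0, x₀)` is feasible for `EMIP(b)`, and every feasible point with nonzero
slack `(y, z)` pays at least `M > (C·x₀)_j` in each objective, so it is strictly dominated
by `(0, 0, x₀)`. -/

theorem Matrix.mulVec_nonneg_of_nonneg {R ι κ : Type*} [Fintype κ] [Semiring R]
    [PartialOrder R] [IsOrderedRing R] {A : Matrix ι κ R} (hA : ∀ i j, 0 ≤ A i j)
    {v : κ → R} (hv : 0 ≤ v) : 0 ≤ A *ᵥ v :=
  fun i => Finset.sum_nonneg fun j _ => mul_nonneg (hA i j) (hv j)

theorem toInt_nonneg {n : ℕ} (x : Fin n → ℕ) : 0 ≤ toInt x :=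
  fun i => Int.natCast_nonneg (x i)

theorem sum_add_natCast_eq_zero_iff {m : ℕ} {y : Fin m → ℕ} {z : ℕ} :
    (∑ i, (y i : ℤ)) + (z : ℤ) = 0 ↔ y = 0 ∧ z = 0 := by
  rw [← Nat.cast_sum, ← Nat.cast_add, Nat.cast_eq_zero, add_eq_zero, Finset.sum_eq_zero_iff,
    funext_iff]
  simp

theorem eFeas_zero_zero_iff {m n : ℕ} {A : Matrix (Fin m) (Fin n) ℤ} {b : Fin m → ℤ}
    {x : Fin n → ℕ} : EFeas A b 0 0 x ↔ x ∈ FA A b := by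
  simp [EFeas, FA, funext_iff]

theorem phi_zero_zero {m n k : ℕ} (C : Matrix (Fin k) (Fin n) ℤ) (M : ℤ) (x : Fin n → ℕ)
    (j : Fin k) : Phi C M (0 : Fin m → ℕ) 0 x j = (C *ᵥ toInt x) j := by
  simp [Phi]

theorem le_phi_of_slack_ne_zero {m n k : ℕ} {C : Matrix (Fin k) (Fin n) ℤ} (hC : ∀ i j, 0 ≤ C i j)
    {M : ℤ} (hM : 0 ≤ M) {y : Fin m → ℕ} {z : ℕ} (hyz : ¬(y = 0 ∧ z = 0))
    (x : Fin n → ℕ) (j : Fin k) : M ≤ Phi C M y z x j := by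
  have hslack : 1 ≤ (∑ i, (y i : ℤ)) + (z : ℤ) := by
    rw [← sum_add_natCast_eq_zero_iff] at hyz
    have : 0 ≤ (∑ i, (y i : ℤ)) + (z : ℤ) := by positivity
    omega
  have hcost : 0 ≤ (C *ᵥ toInt x) j := Matrix.mulVec_nonneg_of_nonneg hC (toInt_nonneg x) j
  calc M ≤ M * ((∑ i, (y i : ℤ)) + (z : ℤ)) := le_mul_of_one_le_right hM hslack
    _ ≤ Phi C M y z x j := le_add_of_nonneg_right hcost

theorem emip_pareto_zero_general {m n k : ℕ} (hk : 0 < k)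
    (A : Matrix (Fin m) (Fin n) ℤ) (C : Matrix (Fin k) (Fin n) ℤ)
    (hC : ∀ i j, 0 ≤ C i j) (b : Fin m → ℤ)
    (x₀ : Fin n → ℕ) (hx₀ : x₀ ∈ FA A b)
    (M : ℤ) (hMpos : 0 < M) (hM : ∀ j, C.mulVec (toInt x₀) j < M)
    (y : Fin m → ℕ) (z : ℕ) (x : Fin n → ℕ)
    (hpar : EPareto A C M b y z x) :
    y = 0 ∧ z = 0 ∧ A.mulVec (toInt x) = b := by
  obtain ⟨hfeas, hnd⟩ := hpar
  have hyz : y = 0 ∧ z = 0 := by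
    by_contra hyz
    have hdom (j : Fin k) : Phi C M (0 : Fin m → ℕ) 0 x₀ j < Phi C M y z x j := by
      rw [phi_zero_zero]
      exact (hM j).trans_le (le_phi_of_slack_ne_zero hC hMpos.le hyz x j)
    exact hnd ⟨0, 0, x₀, eFeas_zero_zero_iff.mpr hx₀, fun j => (hdom j).le, ⟨0, hk⟩, hdom _⟩
  obtain ⟨rfl, rfl⟩ := hyz
  exact ⟨rfl, rfl, eFeas_zero_zero_iff.mp hfeas⟩

theorem emip_pareto_zero {m n k : ℕ} (hm : 0 < m) (hn : 0 < n) (hk : 0 < k)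
    (A : Matrix (Fin m) (Fin n) ℤ) (C : Matrix (Fin k) (Fin n) ℤ)
    (hC : ∀ i j, 0 ≤ C i j) (b : Fin m → ℤ)
    (x₀ : Fin n → ℕ) (hx₀ : x₀ ∈ FA A b)
    (M : ℤ) (hMpos : 0 < M) (hM : ∀ j, C.mulVec (toInt x₀) j < M)
    (y : Fin m → ℕ) (z : ℕ) (x : Fin n → ℕ)
    (hpar : EPareto A C M b y z x) :
    y = 0 ∧ z = 0 ∧ A.mulVec (toInt x) = b :=
  emip_pareto_zero_general hk A C hC b x₀ hx₀ M hMpos hM y z x hpar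
end
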